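/- Let τ be a complex number with τ⁶ = 1/4, and let y satisfy y'' = −(y')²/y + y·(y⁴ + x) with y ≠ 0 on an open set U. Define ỹ(t) = τ · y(t/(2τ²))². Then ỹ satisfies the second Painlevé equation with zero parameter, ỹ''(t) = 2ỹ(t)³ + t·ỹ(t), at every t with t/(2τ²) ∈ U. -/

import Mathlib

/-!
If `y` solves `y'' = -(y')²/y + y (y⁴ + x)`, then `w = y²` satisfies `w'' = 2 (y'² + y y'') = 2 w³ + 2 x w`:
squaring removes the `(y')²/y` term. The rescaling `t ↦ τ w (t / (2τ²))` multiplies the second derivative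
by `τ / (2τ²)²`, and `τ⁶ = 1/4` is exactly the condition that turns `w'' = 2w³ + 2xw` into Painlevé II
with `α = 0`.
-/

variable {𝕜 : Type*} [NontriviallyNormedField 𝕜]

theorem deriv_comp_div_const (f : 𝕜 → 𝕜) (c : 𝕜) :
    deriv (fun t => f (t / c)) = fun t => deriv f (t / c) / c := by
  funext t
  simp only [div_eq_inv_mul]
  exact deriv_comp_mul_left c⁻¹ f t

theorem deriv_deriv_const_mul_comp_div_const (w : 𝕜 → 𝕜) (a c t : 𝕜) :
    deriv (deriv fun t => a * w (t / c)) t = a * deriv (deriv w) (t / c) / c ^ 2 := by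
  simp only [deriv_const_mul_field', deriv_comp_div_const, deriv_div_const]
  ring

theorem deriv_deriv_sq {y : 𝕜 → 𝕜} {x : 𝕜} (hy : Differentiable 𝕜 y)
    (hy' : DifferentiableAt 𝕜 (deriv y) x) :
    deriv (deriv fun x => y x ^ 2) x = 2 * (deriv y x ^ 2 + y x * deriv (deriv y) x) := by
  have hsq : deriv (fun x => y x ^ 2) = fun x => 2 * (y x * deriv y x) := by
    funext x
    rw [deriv_fun_pow (hy x)]
    ring
  simp only [hsq, deriv_const_mul_field', deriv_fun_mul (hy x) hy']
  ring

theorem deriv_deriv_sq_of_ode {y : 𝕜 → 𝕜} {x : 𝕜} (hy : Differentiable 𝕜 y)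
    (hy' : DifferentiableAt 𝕜 (deriv y) x) (hyx : y x ≠ 0)
    (hode : deriv (deriv y) x = -(deriv y x) ^ 2 / y x + y x * (y x ^ 4 + x)) :
    deriv (deriv fun x => y x ^ 2) x = 2 * (y x ^ 2) ^ 3 + 2 * x * y x ^ 2 := by
  rw [deriv_deriv_sq hy hy', hode]
  field_simp
  ring

theorem explicit_equivalence_painleve2_zero_general (τ : ℂ) (hτ : τ ^ 6 = 1 / 4) (y : ℂ → ℂ)
    (U : Set ℂ)
    (hy1 : Differentiable ℂ y) (hy2 : Differentiable ℂ (deriv y))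
    (hne : ∀ x ∈ U, y x ≠ 0)
    (hy : ∀ x ∈ U, deriv (deriv y) x = -(deriv y x) ^ 2 / y x + y x * ((y x) ^ 4 + x)) :
    ∀ t : ℂ, t / (2 * τ ^ 2) ∈ U →
      deriv (deriv (fun t => τ * (y (t / (2 * τ ^ 2))) ^ 2)) t
        = 2 * (τ * (y (t / (2 * τ ^ 2))) ^ 2) ^ 3 + t * (τ * (y (t / (2 * τ ^ 2))) ^ 2) := by
  intro t hs
  have hτ0 : τ ≠ 0 := by
    rintro rfl
    norm_num at hτ
  have ht : t = t / (2 * τ ^ 2) * (2 * τ ^ 2) := by field_simp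
  rw [deriv_deriv_const_mul_comp_div_const (fun x => y x ^ 2),
    deriv_deriv_sq_of_ode hy1 (hy2 _) (hne _ hs) (hy _ hs)]
  generalize t / (2 * τ ^ 2) = s at ht
  subst ht
  field_simp
  linear_combination (-4 * y s ^ 2 * (y s ^ 4 + s)) * hτ

/-- The explicit point transformation mapping y'' = -(y')²/y + y(y⁴+x) to the
second Painlevé equation with α = 0. -/
theorem explicit_equivalence_painleve2_zero (τ : ℂ) (hτ : τ ^ 6 = 1 / 4) (y : ℂ → ℂ)
    (U : Set ℂ) (hU : IsOpen U)
    (hy1 : Differentiable ℂ y) (hy2 : Differentiable ℂ (deriv y))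
    (hne : ∀ x ∈ U, y x ≠ 0)
    (hy : ∀ x ∈ U, deriv (deriv y) x = -(deriv y x) ^ 2 / y x + y x * ((y x) ^ 4 + x)) :
    ∀ t : ℂ, t / (2 * τ ^ 2) ∈ U →
      deriv (deriv (fun t => τ * (y (t / (2 * τ ^ 2))) ^ 2)) t
        = 2 * (τ * (y (t / (2 * τ ^ 2))) ^ 2) ^ 3 + t * (τ * (y (t / (2 * τ ^ 2))) ^ 2) :=
  explicit_equivalence_painleve2_zero_general τ hτ y U hy1 hy2 hne hy
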